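/- arXiv:1901.06056 — 4 statements merged into one kernel-verified Lean document; each statement's English description precedes it below -/
import Mathlib

section
/- A ring R is CCR if and only if for every simple left R-module M and every r ∈ R, the element r acts on M as a finite rank operator over the division ring D = End_R(M); that is, the D-submodule of M generated by the set r•M = {r•m : m ∈ M} is a finitely generated D-module. -/
/-!
For a simple module `M` with `D = End_R(M)`, the elements acting on `M` with finitely generated
image over `D` form a two-sided ideal. If `R / ann M` is simple with a minimal left ideal `L`,
then `b ↦ b • m₀` identifies `L` with `M`, so every element of `L` has rank at most one; the
ideal is therefore nonzero, hence everything. Conversely, if the identity has finite rank then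
`M` is finite-dimensional over `D`, and the Jacobson density theorem identifies a primitive
quotient `R / P` with `End_D(M)`, a matrix ring over a division ring: simple and semisimple, so
it has a minimal left ideal. Passing between `R` and `R / P` is harmless, as both rings act on
`M` with the same submodules and the same endomorphisms.
-/

universe u

open Function Submodule

/-- A ring is (left) primitive if it admits a faithful simple left module. -/
def IsPrimitiveRing (R : Type u) [Ring R] : Prop :=
  ∃ (M : Type u) (_ : AddCommGroup M) (_ : Module R M), IsSimpleModule R M ∧ FaithfulSMul R M

/-- A ring has a minimal left ideal if there is an atom in its lattice of left ideals. -/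
def HasMinimalLeftIdeal (R : Type u) [Ring R] : Prop :=
  ∃ L : Submodule R R, IsAtom L

/-- A ring is CCR if every primitive quotient is a simple ring with a minimal left ideal. -/
def IsCCRRing (R : Type u) [Ring R] : Prop :=
  ∀ P : TwoSidedIdeal R, IsPrimitiveRing P.ringCon.Quotient →
    IsSimpleRing P.ringCon.Quotient ∧ HasMinimalLeftIdeal P.ringCon.Quotient

section FiniteRank

variable {Q M : Type*} [Ring Q] [AddCommGroup M] [Module Q M]

theorem span_range_smul_eq_range_toModuleEnd (q : Q) :
    span (Module.End Q M) (Set.range fun m : M => q • m) =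
      LinearMap.range (Module.toModuleEnd (Module.End Q M) (S := Q) M q) := by
  conv_rhs => rw [← span_eq (LinearMap.range _), LinearMap.coe_range]
  rfl

variable (Q M) in
def finiteRankIdeal [IsNoetherianRing (Module.End Q M)] : TwoSidedIdeal Q :=
  .mk' {q | (LinearMap.range (Module.toModuleEnd (Module.End Q M) (S := Q) M q)).FG}
    (by rw [Set.mem_ofPred_eq, map_zero, LinearMap.range_zero]; exact fg_bot)
    (fun hx hy => (hx.sup hy).of_le (by rw [map_add]; exact LinearMap.range_add_le _ _))
    (fun hx => by rwa [Set.mem_ofPred_eq, map_neg, LinearMap.range_neg])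
    (fun {x y} hy => by
      rw [Set.mem_ofPred_eq, map_mul, Module.End.mul_eq_comp, LinearMap.range_comp]
      exact hy.map _)
    (fun {x y} hx => hx.of_le (by
      rw [map_mul, Module.End.mul_eq_comp]
      exact LinearMap.range_comp_le_range _ _))

theorem mem_finiteRankIdeal [IsNoetherianRing (Module.End Q M)] {q : Q} :
    q ∈ finiteRankIdeal Q M ↔
      (LinearMap.range (Module.toModuleEnd (Module.End Q M) (S := Q) M q)).FG :=
  TwoSidedIdeal.mem_mk' ..

theorem fg_range_toModuleEnd_of_mem_atom [IsSimpleModule Q M] {L : Submodule Q Q}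
    (hL : IsAtom L) {a : Q} (ha : a ∈ L) :
    (LinearMap.range (Module.toModuleEnd (Module.End Q M) (S := Q) M a)).FG := by
  have : IsSimpleModule Q L := isSimpleModule_iff_isAtom.mpr hL
  let φ (m : M) : L →ₗ[Q] M := (LinearMap.toSpanSingleton Q M m).comp L.subtype
  by_cases hφ : ∃ m₀, φ m₀ ≠ 0
  · obtain ⟨m₀, hm₀⟩ := hφ
    let e := LinearEquiv.ofBijective (φ m₀) (LinearMap.bijective_of_ne_zero hm₀)
    suffices LinearMap.range (Module.toModuleEnd (Module.End Q M) (S := Q) M a) =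
        span (Module.End Q M) {a • m₀} from this ▸ fg_span_singleton _
    refine le_antisymm ?_ (span_le.2 (Set.singleton_subset_iff.2 ⟨m₀, rfl⟩))
    rintro _ ⟨m, rfl⟩
    have hd : (φ m ∘ₗ e.symm.toLinearMap) (a • m₀) = a • m := by
      rw [show a • m₀ = e ⟨a, ha⟩ from rfl]
      simp [φ]
    change a • m ∈ _
    rw [← hd]
    exact smul_mem _ _ (mem_span_singleton_self _)
  · push Not at hφ
    refine ⟨∅, ?_⟩
    rw [Finset.coe_empty, span_empty, eq_comm, LinearMap.range_eq_bot]
    ext m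
    exact congr($(hφ m) ⟨a, ha⟩)

theorem finiteRankIdeal_eq_top [IsSimpleRing Q] [IsSimpleModule Q M]
    [IsNoetherianRing (Module.End Q M)] {L : Submodule Q Q} (hL : IsAtom L) :
    finiteRankIdeal Q M = ⊤ := by
  obtain ⟨a, haL, ha⟩ := (Submodule.ne_bot_iff L).mp hL.1
  exact (TwoSidedIdeal.one_mem_iff _).mp <| IsSimpleRing.one_mem_of_ne_zero_mem _ ha <|
    mem_finiteRankIdeal.mpr (fg_range_toModuleEnd_of_mem_atom hL haL)

theorem fg_span_range_smul_of_isAtom [IsSimpleRing Q] [IsSimpleModule Q M]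
    {L : Submodule Q Q} (hL : IsAtom L) (q : Q) :
    (span (Module.End Q M) (Set.range fun m : M => q • m)).FG := by
  classical
  rw [span_range_smul_eq_range_toModuleEnd, ← mem_finiteRankIdeal, finiteRankIdeal_eq_top hL]
  exact TwoSidedIdeal.mem_top _

end FiniteRank

theorem Module.End.isSimpleRing_of_divisionRing {D V : Type*} [DivisionRing D] [AddCommGroup V]
    [Module D V] [Module.Finite D V] [Nontrivial V] : IsSimpleRing (Module.End D V) := by
  have : NeZero (Module.finrank D V) := ⟨Module.finrank_pos.ne'⟩
  have : IsSimpleRing (Module.End D D) := .of_ringEquiv (RingEquiv.moduleEndSelf D) inferInstance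
  exact .of_ringEquiv ((Module.finBasis D V).equivFun.conjRingEquiv.trans
    (endVecRingEquivMatrixEnd ..)).symm inferInstance

theorem isSimpleRing_and_hasMinimalLeftIdeal_of_finite {Q : Type*} [Ring Q] (M : Type*)
    [AddCommGroup M] [Module Q M] [IsSimpleModule Q M] [FaithfulSMul Q M]
    [Module.Finite (Module.End Q M) M] : IsSimpleRing Q ∧ HasMinimalLeftIdeal Q := by
  classical
  have : Nontrivial M := IsSimpleModule.nontrivial Q M
  let e : Q ≃+* Module.End (Module.End Q M) M := .ofBijective (Module.toModuleEnd _ M)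
    ⟨fun a b h => eq_of_smul_eq_smul fun m => LinearMap.congr_fun h m,
      Module.Finite.toModuleEnd_moduleEnd_surjective⟩
  have hQ : IsSimpleRing Q := .of_ringEquiv e.symm Module.End.isSimpleRing_of_divisionRing
  have : IsSemisimpleRing (Module.End (Module.End Q M) M) := .moduleEnd _ M
  -- for a simple ring, semisimple ↔ has a minimal left ideal
  exact ⟨hQ, (IsSimpleRing.tfae.out 0 2).mp e.symm.isSemisimpleRing⟩

section ChangeOfRings

variable {R Q M : Type*} [Ring R] [Ring Q] [AddCommGroup M] [Module R M] [Module Q M]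
  {f : R →+* Q}

def semilinearId (hc : ∀ (r : R) (m : M), f r • m = r • m) : M →ₛₗ[f] M where
  toFun := id
  map_add' _ _ := rfl
  map_smul' r m := (hc r m).symm

theorem isSimpleModule_iff_of_surjective (hf : Surjective f)
    (hc : ∀ (r : R) (m : M), f r • m = r • m) : IsSimpleModule R M ↔ IsSimpleModule Q M :=
  have : RingHomSurjective f := ⟨hf⟩
  (semilinearId hc).isSimpleModule_iff_of_bijective bijective_id

theorem Submodule.FG.span_of_surjective (hf : Surjective f)
    (hc : ∀ (r : R) (m : M), f r • m = r • m) {S : Set M} (h : (span R S).FG) :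
    (span Q S).FG := by
  have : RingHomSurjective f := ⟨hf⟩
  simpa [map_span, semilinearId] using h.map (semilinearId hc)

def moduleEndRingEquivOfSurjective (hf : Surjective f)
    (hc : ∀ (r : R) (m : M), f r • m = r • m) : Module.End Q M ≃+* Module.End R M where
  toFun d := { d with map_smul' r m := by simp [← hc] }
  invFun d :=
    { d with
      map_smul' q m := by
        obtain ⟨r, rfl⟩ := hf q
        simp [hc] }
  map_mul' _ _ := rfl
  map_add' _ _ := rfl

theorem fg_span_moduleEnd_iff (hf : Surjective f) (hc : ∀ (r : R) (m : M), f r • m = r • m)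
    {S : Set M} : (span (Module.End R M) S).FG ↔ (span (Module.End Q M) S).FG :=
  let e := moduleEndRingEquivOfSurjective hf hc
  ⟨.span_of_surjective (f := e.symm.toRingHom) e.symm.surjective fun _ _ => rfl,
    .span_of_surjective (f := e.toRingHom) e.surjective fun _ _ => rfl⟩

end ChangeOfRings

theorem exists_faithfulSMul_quotient (R M : Type*) [Ring R] [AddCommGroup M] [Module R M] :
    ∃ (P : TwoSidedIdeal R) (_ : Module P.ringCon.Quotient M),
      FaithfulSMul P.ringCon.Quotient M ∧ ∀ (r : R) (m : M), P.ringCon.mk' r • m = r • m := by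
  let ρ := Module.toAddMonoidEnd R M
  let P := TwoSidedIdeal.ker ρ
  have hP : P.ringCon = RingCon.ker ρ := RingCon.ext fun _ _ => Iff.rfl
  let := Module.compHom M (P.ringCon.lift ρ hP.le)
  exact ⟨P, this, ⟨fun h => RingCon.lift_injective_iff.mpr hP (AddMonoidHom.ext h)⟩,
    fun _ _ => rfl⟩

/-- A ring `R` is CCR if and only if for every simple left `R`-module `M`, every `r ∈ R` acts
on `M` as a finite rank operator over the division ring `D = End_R(M)`; i.e., the
`D`-submodule of `M` generated by `r • M` is a finitely generated `D`-module. -/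
theorem isCCRRing_iff_finite_rank (R : Type u) [Ring R] :
    IsCCRRing R ↔
      ∀ (M : Type u) [AddCommGroup M] [Module R M], IsSimpleModule R M →
        ∀ r : R,
          (Submodule.span (Module.End R M) (Set.range fun m : M => r • m)).FG := by
  constructor
  · intro hccr M _ _ hM r
    obtain ⟨P, _, _, hc⟩ := exists_faithfulSMul_quotient R M
    have hQM := (isSimpleModule_iff_of_surjective P.ringCon.mk'_surjective hc).mp hM
    obtain ⟨_, L, hL⟩ := hccr P ⟨M, inferInstance, inferInstance, hQM, inferInstance⟩
    rw [fg_span_moduleEnd_iff P.ringCon.mk'_surjective hc]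
    simpa only [hc] using fg_span_range_smul_of_isAtom (M := M) hL (P.ringCon.mk' r)
  · rintro h P ⟨M, _, _, _, _⟩
    let _ : Module R M := Module.compHom M P.ringCon.mk'
    have hc : ∀ (r : R) (m : M), P.ringCon.mk' r • m = r • m := fun _ _ => rfl
    have hRM := (isSimpleModule_iff_of_surjective P.ringCon.mk'_surjective hc).mpr ‹_›
    have hfg := h M hRM 1
    rw [fg_span_moduleEnd_iff P.ringCon.mk'_surjective hc] at hfg
    simp only [one_smul, Set.range_id', span_univ] at hfg
    have : Module.Finite (Module.End P.ringCon.Quotient M) M := ⟨hfg⟩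
    exact isSimpleRing_and_hasMinimalLeftIdeal_of_finite M
end

section
/- Let k be an algebraically closed field and let A be a k-algebra whose dimension as a k-vector space is strictly less than the cardinality of k. Then A is GCR if and only if for every simple left A-module V there exists a ∈ A whose action on V is a nonzero k-linear operator of finite rank; that is, a•V ≠ 0 and the k-subspace a•V of V is finite-dimensional over k. -/
/-- A ring is GCR if every primitive quotient has a minimal left ideal. -/
def IsGCRRing (R : Type u) [Ring R] : Prop :=
  ∀ P : TwoSidedIdeal R, IsPrimitiveRing P.ringCon.Quotient →
    HasMinimalLeftIdeal P.ringCon.Quotient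

/-!
A simple `A`-module `V` is a quotient of `A`, so `dim_k V < #k`, and Amitsur's trick makes `k`
its full endomorphism ring: a transcendental endomorphism `φ` would give the `#k` linearly
independent resolvents `(φ - c)⁻¹`. The primitive quotients of `A` are exactly the `A ⧸ P`
with `P` the annihilator of a simple module `V`, acting faithfully on `V`. As the
endomorphisms of `V` are scalars, the density argument shows that an `r ∈ A ⧸ P` of minimal
positive finite rank on `V` has rank one, and then `(A ⧸ P) r` is a minimal left ideal;
conversely a nonzero `r` in a minimal left ideal `L` has rank one, because `L ≅ V`.
-/

universe u v w

open Polynomial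

theorem Transcendental.linearIndependent_sub_inv_of_divisionRing {F E : Type*} [Field F]
    [DivisionRing E] [Algebra F E] {x : E} (H : Transcendental F x) :
    LinearIndependent F fun a ↦ (x - algebraMap F E a)⁻¹ := by
  classical
  rw [transcendental_iff] at H
  refine linearIndependent_iff'.2 fun s m hm i hi ↦ ?_
  have hnz (a : F) : x - algebraMap F E a ≠ 0 := fun h ↦
    X_sub_C_ne_zero a <| H (X - C a) (by simp [h])
  set b := Polynomial.aeval x (∏ l ∈ s, (X - C l)) with hb_def
  have hb (j) (hj : j ∈ s) : b * (x - algebraMap F E j)⁻¹ =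
      Polynomial.aeval x (∏ l ∈ s.erase j, (X - C l)) := by
    rw [hb_def, ← s.prod_erase_mul _ hj, map_mul, map_sub, aeval_X, aeval_C,
      mul_inv_cancel_right₀ (hnz j)]
  -- multiplying the relation by `b` clears denominators; then `p` vanishes at `x`, and `p i`
  -- is `m i` times a nonzero scalar
  let p : F[X] := ∑ j ∈ s, C (m j) * ∏ l ∈ s.erase j, (X - C l)
  have hp : p = 0 := H p <| calc
    Polynomial.aeval x p = ∑ j ∈ s, m j • (b * (x - algebraMap F E j)⁻¹) := by
      simp only [p, map_sum, map_mul, aeval_C, ← Algebra.smul_def]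
      exact Finset.sum_congr rfl fun j hj ↦ by rw [hb j hj]
    _ = b * ∑ j ∈ s, m j • (x - algebraMap F E j)⁻¹ := by
      simp only [Finset.mul_sum, mul_smul_comm]
    _ = 0 := by rw [hm, mul_zero]
  have hpi := congr(eval i $hp)
  simp only [p, eval_finsetSum, eval_mul, eval_C, eval_prod, eval_sub, eval_X, eval_zero] at hpi
  rw [Finset.sum_eq_single_of_mem i hi fun j hj hji ↦ by
    rw [Finset.prod_eq_zero (Finset.mem_erase_of_ne_of_mem hji.symm hi) (sub_self i), mul_zero]]
    at hpi
  exact (mul_eq_zero.1 hpi).resolve_right <| Finset.prod_ne_zero_iff.2 fun l hl ↦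
    sub_ne_zero.2 (Finset.ne_of_mem_erase hl).symm

theorem IsAlgClosed.algebraMap_surjective_of_lift_rank_lt {k : Type u} {D : Type v} [Field k]
    [IsAlgClosed k] [DivisionRing D] [Algebra k D]
    (hD : Cardinal.lift.{u} (Module.rank k D) < Cardinal.lift.{v} (Cardinal.mk k)) :
    Function.Surjective (algebraMap k D) := by
  intro x
  by_cases hx : Transcendental k x
  · exact absurd hx.linearIndependent_sub_inv_of_divisionRing.cardinal_lift_le_rank hD.not_ge
  · exact minpoly.mem_range_of_degree_eq_one k x <| IsAlgClosed.degree_eq_one_of_irreducible k <|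
      minpoly.irreducible (not_not.1 hx).isIntegral

theorem Submodule.finrank_map_lt_of_mem_ker {K V V₂ : Type*} [DivisionRing K] [AddCommGroup V]
    [Module K V] [AddCommGroup V₂] [Module K V₂] (W : Submodule K V) [FiniteDimensional K W]
    (f : V →ₗ[K] V₂) {u : V} (huW : u ∈ W) (hu : u ≠ 0) (hfu : f u = 0) :
    Module.finrank K (W.map f) < Module.finrank K W := by
  have hker : 0 < Module.finrank K (LinearMap.ker (f ∘ₗ W.subtype)) :=
    Module.finrank_pos_iff_exists_ne_zero.2
      ⟨⟨⟨u, huW⟩, hfu⟩, fun h ↦ hu congr(($h : W).1)⟩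
  have := LinearMap.finrank_range_add_finrank_ker (f ∘ₗ W.subtype)
  rw [LinearMap.range_comp, Submodule.range_subtype] at this
  omega

theorem exists_smul_ne_zero_of_ne_zero {R V : Type*} [Zero R] [Zero V] [SMulWithZero R V]
    [FaithfulSMul R V] {r : R} (hr : r ≠ 0) : ∃ v : V, r • v ≠ 0 := by
  by_contra! h
  exact hr (eq_of_smul_eq_smul fun v ↦ by rw [h v, zero_smul])

theorem isSimpleModule_iff_of_surjective_s9 {R S M : Type*} [Ring R] [Ring S] [AddCommGroup M]
    [Module R M] [Module S M] (f : R →+* S) (hf : Function.Surjective f)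
    (h : ∀ (a : R) (m : M), f a • m = a • m) : IsSimpleModule R M ↔ IsSimpleModule S M :=
  have : RingHomSurjective f := ⟨hf⟩
  LinearMap.isSimpleModule_iff_of_bijective
    { toFun := id, map_add' := fun _ _ ↦ rfl, map_smul' := fun a m ↦ (h a m).symm }
    Function.bijective_id

section RankOfAction

variable (k : Type*) {R : Type*} (V : Type*) [Field k] [Ring R] [AddCommGroup V] [Module R V]
  [Module k V]

def ActsWithPositiveFiniteRank (r : R) : Prop :=
  (∃ v : V, r • v ≠ 0) ∧ (Submodule.span k (Set.range fun v : V ↦ r • v)).FG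

def ActsWithRankOne (r : R) : Prop :=
  ∃ v₀ : V, r • v₀ ≠ 0 ∧ ∀ v : V, ∃ c : k, r • v = c • r • v₀

variable {k V}

theorem ActsWithRankOne.actsWithPositiveFiniteRank {r : R} (hr : ActsWithRankOne k V r) :
    ActsWithPositiveFiniteRank k V r := by
  obtain ⟨v₀, hv₀, hr⟩ := hr
  refine ⟨⟨v₀, hv₀⟩, {r • v₀}, le_antisymm ?_ ?_⟩
  · rw [Finset.coe_singleton, Submodule.span_singleton_le_iff_mem]
    exact Submodule.subset_span ⟨v₀, rfl⟩
  · rw [Finset.coe_singleton, Submodule.span_le]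
    rintro _ ⟨v, rfl⟩
    obtain ⟨c, hc⟩ := hr v
    change r • v ∈ _
    rw [hc]
    exact Submodule.smul_mem _ c (Submodule.mem_span_singleton_self _)

theorem span_range_mul_smul [SMulCommClass R k V] (s r : R) :
    Submodule.span k (Set.range fun v : V ↦ (s * r) • v) =
      (Submodule.span k (Set.range fun v : V ↦ r • v)).map (DistribSMul.toLinearMap k V s) := by
  rw [Submodule.map_span, ← Set.range_comp]
  simp only [Function.comp_def, DistribSMul.toLinearMap_apply, mul_smul]

end RankOfAction

section SimpleModule

variable {k : Type u} {R : Type v} {V : Type w} [Field k] [Ring R] [Algebra k R]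
  [AddCommGroup V] [Module R V] [Module k V] [IsScalarTower k R V] [IsSimpleModule R V]

theorem IsSimpleModule.lift_rank_le :
    Cardinal.lift.{v} (Module.rank k V) ≤ Cardinal.lift.{w} (Module.rank k R) := by
  have := IsSimpleModule.nontrivial R V
  obtain ⟨v, hv⟩ := exists_ne (0 : V)
  exact ((LinearMap.toSpanSingleton R V v).restrictScalars k).lift_rank_le_of_surjective
    (IsSimpleModule.toSpanSingleton_surjective R hv)

theorem IsSimpleModule.algebraMap_end_surjective_of_lift_rank_lt [IsAlgClosed k]
    (hV : Cardinal.lift.{u} (Module.rank k V) < Cardinal.lift.{w} (Cardinal.mk k)) :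
    Function.Surjective (algebraMap k (Module.End R V)) := by
  classical
  have := IsSimpleModule.nontrivial R V
  obtain ⟨v, hv⟩ := exists_ne (0 : V)
  have heval : Function.Injective (LinearMap.applyₗ' k v : Module.End R V →ₗ[k] V) := by
    rw [← LinearMap.ker_eq_bot, LinearMap.ker_eq_bot']
    intro f hf
    exact (LinearMap.injective_or_eq_zero f).resolve_left fun h ↦
      hv (h (hf.trans f.map_zero.symm))
  exact IsAlgClosed.algebraMap_surjective_of_lift_rank_lt <|
    (Cardinal.lift_le.2 (LinearMap.rank_le_of_injective _ heval)).trans_lt hV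

variable (hEnd : Function.Surjective (algebraMap k (Module.End R V)))
include hEnd

theorem IsSimpleModule.exists_eq_smul_of_annihilator_le {u v : V} (hu : u ≠ 0)
    (h : ∀ s : R, s • u = 0 → s • v = 0) : ∃ c : k, v = c • u := by
  have hker : LinearMap.ker (LinearMap.toSpanSingleton R V u) ≤
      LinearMap.ker (LinearMap.toSpanSingleton R V v) := h
  let e := LinearMap.quotKerEquivOfSurjective _ (IsSimpleModule.toSpanSingleton_surjective R hu)
  let θ : Module.End R V := (LinearMap.ker _).liftQ _ hker ∘ₗ e.symm
  obtain ⟨c, hc⟩ := hEnd θ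
  have hθ : θ u = v := by
    have : e.symm u = Submodule.Quotient.mk 1 := by
      rw [LinearEquiv.symm_apply_eq, LinearMap.quotKerEquivOfSurjective_apply_mk,
        LinearMap.toSpanSingleton_apply, one_smul]
    simp [θ, this]
  exact ⟨c, by rw [← hθ, ← hc, Module.algebraMap_end_apply]⟩

theorem ActsWithPositiveFiniteRank.exists_actsWithRankOne {r : R}
    (hr : ActsWithPositiveFiniteRank k V r) : ∃ s : R, ActsWithRankOne k V s := by
  let W (s : R) := Submodule.span k (Set.range fun v : V ↦ s • v)
  obtain ⟨r, ⟨⟨v₀, hv₀⟩, hfg⟩, hmin⟩ :=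
    (measure fun s ↦ Module.finrank k (W s)).wf.has_min
      {s | ActsWithPositiveFiniteRank k V s} ⟨r, hr⟩
  have : FiniteDimensional k (W r) := Module.Finite.iff_fg.2 hfg
  refine ⟨r, v₀, hv₀, fun v ↦ IsSimpleModule.exists_eq_smul_of_annihilator_le hEnd hv₀
    fun s hs ↦ ?_⟩
  -- otherwise `s * r` has positive rank, smaller than that of `r` since `s` kills `r • v₀`
  by_contra hsv
  have hW : W (s * r) = (W r).map (DistribSMul.toLinearMap k V s) := span_range_mul_smul s r
  refine hmin (s * r) ⟨⟨v, by rwa [mul_smul]⟩, show (W (s * r)).FG from hW ▸ hfg.map _⟩ ?_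
  change Module.finrank k (W (s * r)) < Module.finrank k (W r)
  rw [hW]
  exact (W r).finrank_map_lt_of_mem_ker _ (Submodule.subset_span ⟨v₀, rfl⟩) hv₀ hs

theorem exists_actsWithRankOne_of_isAtom [FaithfulSMul R V] {L : Submodule R R} (hL : IsAtom L) :
    ∃ r : R, ActsWithRankOne k V r := by
  obtain ⟨r, hrL, hr⟩ := Submodule.exists_mem_ne_zero_of_ne_bot hL.1
  obtain ⟨v₀, hv₀⟩ := exists_smul_ne_zero_of_ne_zero (V := V) hr
  have := isSimpleModule_iff_isAtom.2 hL
  have hinj : Function.Injective (LinearMap.toSpanSingleton R V v₀ ∘ₗ L.subtype) :=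
    (LinearMap.injective_or_eq_zero _).resolve_right fun h ↦ hv₀ congr($h ⟨r, hrL⟩)
  refine ⟨r, v₀, hv₀, fun v ↦ IsSimpleModule.exists_eq_smul_of_annihilator_le hEnd hv₀
    fun s hs ↦ ?_⟩
  have : s * r = 0 := congr_arg Subtype.val <|
    hinj (a₁ := ⟨s * r, L.smul_mem s hrL⟩) (a₂ := 0) (by simpa [mul_smul] using hs)
  rw [← mul_smul, this, zero_smul]

end SimpleModule

theorem ActsWithRankOne.isAtom_span_singleton {k R V : Type*} [Field k] [Ring R]
    [AddCommGroup V] [Module R V] [Module k V] [SMulCommClass R k V] [IsSimpleModule R V]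
    [FaithfulSMul R V] {r : R} (hr : ActsWithRankOne k V r) : IsAtom (Submodule.span R {r}) := by
  obtain ⟨v₀, hv₀, hr⟩ := hr
  refine isAtom_iff_le_of_ge.2 ⟨fun h ↦ hv₀ ?_, fun L hL hLr ↦ ?_⟩
  · rw [Submodule.span_singleton_eq_bot.1 h, zero_smul]
  obtain ⟨s, hsL, hs⟩ := Submodule.exists_mem_ne_zero_of_ne_bot hL
  obtain ⟨t, rfl⟩ := Submodule.mem_span_singleton.1 (hLr hsL)
  obtain ⟨v₁, hv₁⟩ := exists_smul_ne_zero_of_ne_zero (V := V) hs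
  have htr : t • r • v₀ ≠ 0 := fun h ↦ hv₁ <| by
    obtain ⟨c, hc⟩ := hr v₁
    rw [smul_eq_mul, mul_smul, hc, smul_comm, h, smul_zero]
  obtain ⟨x, hx⟩ := IsSimpleModule.toSpanSingleton_surjective R htr (r • v₀)
  have hxtr : x • t • r = r := eq_of_smul_eq_smul (α := V) fun v ↦ by
    obtain ⟨c, hc⟩ := hr v
    rw [LinearMap.toSpanSingleton_apply] at hx
    simp only [smul_eq_mul, mul_smul, hc, smul_comm _ c, hx]
  rw [Submodule.span_singleton_le_iff_mem, ← hxtr]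
  exact L.smul_mem x hsL

def Module.twoSidedAnnihilator (A V : Type*) [Ring A] [AddCommGroup V] [Module A V] :
    TwoSidedIdeal A :=
  TwoSidedIdeal.ker (Module.toAddMonoidEnd A V)

namespace Module.twoSidedAnnihilator

variable {A V : Type*} [Ring A] [AddCommGroup V] [Module A V]

instance : Module (twoSidedAnnihilator A V).ringCon.Quotient V :=
  Module.compHom V (RingCon.lift _ (Module.toAddMonoidEnd A V) fun _ _ ↦ id)

theorem mk'_smul (a : A) (v : V) : (twoSidedAnnihilator A V).ringCon.mk' a • v = a • v := rfl

instance : FaithfulSMul (twoSidedAnnihilator A V).ringCon.Quotient V :=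
  ⟨fun h ↦ RingCon.lift_injective_iff.2 (RingCon.ext fun _ _ ↦ (RingCon.ker_apply ..).symm)
    (DFunLike.ext _ _ h)⟩

instance [IsSimpleModule A V] : IsSimpleModule (twoSidedAnnihilator A V).ringCon.Quotient V :=
  (isSimpleModule_iff_of_surjective_s9 _ (RingCon.mk'_surjective _) mk'_smul).1 ‹_›

instance {k : Type*} [CommSemiring k] [Algebra k A] [Module k V] [IsScalarTower k A V] :
    IsScalarTower k (twoSidedAnnihilator A V).ringCon.Quotient V :=
  .of_algebraMap_smul fun c v ↦ algebraMap_smul A c v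

end Module.twoSidedAnnihilator

/-- Let `k` be an algebraically closed field and `A` a `k`-algebra whose dimension as a
`k`-vector space is strictly less than the cardinality of `k`.  Then `A` is GCR if and only
if for every simple left `A`-module `V` there exists `a ∈ A` whose action on `V` is a
nonzero `k`-linear operator of finite rank, i.e., `a • V ≠ 0` and the `k`-subspace `a • V`
of `V` is finite-dimensional over `k`. -/
theorem isGCRRing_iff_exists_finite_rank_over_field (k : Type u) (A : Type v) [Field k]
    [IsAlgClosed k] [Ring A] [Algebra k A]
    (hdim : Cardinal.lift.{u} (Module.rank k A) < Cardinal.lift.{v} (Cardinal.mk k)) :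
    IsGCRRing A ↔
      ∀ (V : Type v) [AddCommGroup V] [Module k V] [Module A V] [IsScalarTower k A V],
        IsSimpleModule A V →
          ∃ a : A, (∃ v : V, a • v ≠ 0) ∧
            (Submodule.span k (Set.range fun v : V => a • v)).FG := by
  have hrank (V : Type v) [AddCommGroup V] [Module A V] [Module k V] [IsScalarTower k A V]
      [IsSimpleModule A V] :
      Cardinal.lift.{u} (Module.rank k V) < Cardinal.lift.{v} (Cardinal.mk k) :=
    (Cardinal.lift_le.2 (Cardinal.lift_le.1 (IsSimpleModule.lift_rank_le (R := A)))).trans_lt hdim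
  constructor
  · intro hGCR V _ _ _ _ _
    have hEnd := IsSimpleModule.algebraMap_end_surjective_of_lift_rank_lt
      (R := (Module.twoSidedAnnihilator A V).ringCon.Quotient) (hrank V)
    obtain ⟨L, hL⟩ :=
      hGCR (Module.twoSidedAnnihilator A V) ⟨V, _, _, inferInstance, inferInstance⟩
    obtain ⟨r, hr⟩ := exists_actsWithRankOne_of_isAtom hEnd hL
    obtain ⟨a, rfl⟩ := RingCon.mk'_surjective _ r
    exact ⟨a, hr.actsWithPositiveFiniteRank⟩
  · rintro h P ⟨M, _, _, hM, _⟩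
    let _ : Module A M := Module.compHom M P.ringCon.mk'
    let _ : Module k M := Module.compHom M (algebraMap k A)
    have : IsScalarTower k A M := .of_algebraMap_smul fun _ _ ↦ rfl
    have : IsScalarTower k P.ringCon.Quotient M := .of_algebraMap_smul fun _ _ ↦ rfl
    have : IsSimpleModule A M :=
      (isSimpleModule_iff_of_surjective_s9 _ (RingCon.mk'_surjective _) fun _ _ ↦ rfl).2 hM
    have hEnd := IsSimpleModule.algebraMap_end_surjective_of_lift_rank_lt
      (R := P.ringCon.Quotient) (hrank M)
    obtain ⟨a, ha⟩ := h M this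
    obtain ⟨r, hr⟩ :=
      ActsWithPositiveFiniteRank.exists_actsWithRankOne hEnd (r := P.ringCon.mk' a) ha
    exact ⟨_, hr.isAtom_span_singleton⟩
end

section
/- Let R be a unital ring and let n be a nonempty finite index type. Then R is CCR if and only if the matrix ring of n-by-n matrices over R is CCR. -/
/-!
The two-sided ideals of `Mₙ(R)` are exactly the `Mₙ(I)`, and `Mₙ(R) ⧸ Mₙ(I) ≃+* Mₙ(R ⧸ I)`, so it
suffices to show that being primitive, being simple and having a minimal left ideal are each
invariant under `S ↦ Mₙ(S)` (and under ring isomorphisms). For simplicity this is the ideal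
correspondence again. For the other two we use the Morita equivalence `M ↦ Mⁿ` between
`S`-modules and `Mₙ(S)`-modules: it preserves and reflects simplicity and faithfulness. A minimal
left ideal is the image of a nonzero map from a simple module into the ring, and a simple
`S`-module `M` maps nontrivially to `S` iff `Mⁿ` maps nontrivially to `Mₙ(S)` (through a column
in one direction, by reading off one entry of a row in the other).
-/

universe u v w

open Matrix Matrix.Module

theorem LinearEquiv.faithfulSMul_iff {R M N : Type*} [Ring R] [AddCommGroup M] [AddCommGroup N]
    [Module R M] [Module R N] (e : M ≃ₗ[R] N) : FaithfulSMul R M ↔ FaithfulSMul R N := by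
  rw [← Module.annihilator_eq_bot, ← Module.annihilator_eq_bot, e.annihilator_eq]

section Characterizations

variable {S : Type u} [Ring S]

theorem IsPrimitiveRing.of_faithfulSMul (M : Type*) [AddCommGroup M] [Module S M]
    [IsSimpleModule S M] [FaithfulSMul S M] : IsPrimitiveRing S := by
  obtain ⟨I, -, ⟨e⟩⟩ := isSimpleModule_iff_quot_maximal.mp ‹IsSimpleModule S M›
  exact ⟨S ⧸ I, _, _, IsSimpleModule.congr e.symm, e.faithfulSMul_iff.mp ‹_›⟩

/- Simple modules are cyclic, so the witnesses of these two characterizations may be taken in any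
universe above that of `S`; modules over matrix rings over `S` need a larger one. -/

theorem isPrimitiveRing_iff_exists_simple_faithful :
    IsPrimitiveRing S ↔ ∃ (M : Type max u w) (_ : AddCommGroup M) (_ : Module S M),
      IsSimpleModule S M ∧ FaithfulSMul S M := by
  refine ⟨fun ⟨M, _, _, _, hM⟩ ↦ ?_, fun ⟨M, _, _, _, _⟩ ↦ .of_faithfulSMul M⟩
  exact ⟨ULift.{w} M, _, _, .congr ULift.moduleEquiv, ULift.moduleEquiv.faithfulSMul_iff.mpr hM⟩

theorem hasMinimalLeftIdeal_iff_exists_simple_linearMap :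
    HasMinimalLeftIdeal S ↔ ∃ (M : Type max u w) (_ : AddCommGroup M) (_ : Module S M),
      IsSimpleModule S M ∧ ∃ f : M →ₗ[S] S, f ≠ 0 := by
  constructor
  · rintro ⟨L, hL⟩
    have : IsSimpleModule S L := isSimpleModule_iff_isAtom.mpr hL
    have : Nontrivial L := IsSimpleModule.nontrivial S L
    obtain ⟨x, hx⟩ := exists_ne (0 : L)
    refine ⟨ULift.{w} L, _, _, .congr ULift.moduleEquiv, L.subtype ∘ₗ ULift.moduleEquiv.toLinearMap,
      DFunLike.ne_iff.mpr ⟨ULift.up x, by simpa using hx⟩⟩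
  · rintro ⟨M, _, _, _, f, hf⟩
    have e := LinearEquiv.ofInjective f (LinearMap.injective_of_ne_zero hf)
    exact ⟨LinearMap.range f, isSimpleModule_iff_isAtom.mp (.congr e.symm)⟩

end Characterizations

namespace RingEquiv

variable {A B : Type*} [Ring A] [Ring B]

theorem isPrimitiveRing (e : A ≃+* B) (h : IsPrimitiveRing A) : IsPrimitiveRing B := by
  obtain ⟨M, _, _, _, hM⟩ := h
  let : Module B M := Module.compHom M (e.symm : B →+* A)
  let l : M →ₛₗ[(e : A →+* B)] M :=
    { toFun := id
      map_add' _ _ := rfl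
      map_smul' a m := show a • m = e.symm (e a) • m by rw [e.symm_apply_apply] }
  have : IsSimpleModule B M := (l.isSimpleModule_iff_of_bijective Function.bijective_id).mp ‹_›
  have : FaithfulSMul B M := ⟨fun h ↦ e.symm.injective (hM.eq_of_smul_eq_smul h)⟩
  exact .of_faithfulSMul M

theorem hasMinimalLeftIdeal (e : A ≃+* B) (h : HasMinimalLeftIdeal A) : HasMinimalLeftIdeal B := by
  let := RingHomInvPair.of_ringEquiv e
  let := RingHomInvPair.symm (e : A →+* B) (e.symm : B →+* A)
  obtain ⟨L, hL⟩ := h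
  exact ⟨_, ((Submodule.orderIsoMapComap e.toSemilinearEquiv).isAtom_iff L).mpr hL⟩

theorem isPrimitiveRing_iff (e : A ≃+* B) : IsPrimitiveRing A ↔ IsPrimitiveRing B :=
  ⟨e.isPrimitiveRing, e.symm.isPrimitiveRing⟩

theorem hasMinimalLeftIdeal_iff (e : A ≃+* B) : HasMinimalLeftIdeal A ↔ HasMinimalLeftIdeal B :=
  ⟨e.hasMinimalLeftIdeal, e.symm.hasMinimalLeftIdeal⟩

theorem isSimpleRing_iff (e : A ≃+* B) : IsSimpleRing A ↔ IsSimpleRing B :=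
  ⟨.of_ringEquiv e, .of_ringEquiv e.symm⟩

end RingEquiv

noncomputable def TwoSidedIdeal.matrixQuotientEquiv {R : Type*} [Ring R] {n : Type*} [Fintype n]
    [DecidableEq n] (I : TwoSidedIdeal R) :
    (I.matrix n).ringCon.Quotient ≃+* Matrix n n I.ringCon.Quotient :=
  (RingCon.congr (RingEquiv.refl _) (by ext x y; simp [RingCon.ker_apply, ← Matrix.ext_iff])).trans
    (RingCon.quotientKerEquivOfSurjective I.ringCon.mk'.mapMatrix
      (RingCon.mk'_surjective _).comp_left.comp_left)

namespace Matrix.Module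

open CategoryTheory

variable {S : Type u} [Ring S] {ι : Type v} [Fintype ι] [DecidableEq ι]

theorem isSimpleModule_pi_iff [Nonempty ι] {M : Type max w v} [AddCommGroup M] [Module S M] :
    IsSimpleModule (Matrix ι ι S) (ι → M) ↔ IsSimpleModule S M := by
  obtain ⟨i⟩ := ‹Nonempty ι›
  rw [← simple_iff_isSimpleModule, ← simple_iff_isSimpleModule]
  exact simple_obj_iff (ModuleCat.matrixEquivalence S i).functor (ModuleCat.of S M)

theorem faithfulSMul_pi_iff [Nonempty ι] {M : Type*} [AddCommGroup M] [Module S M] :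
    FaithfulSMul (Matrix ι ι S) (ι → M) ↔ FaithfulSMul S M := by
  refine ⟨fun _ ↦ ⟨fun {r s} hrs ↦ (scalar_inj (n := ι)).mp
    (eq_of_smul_eq_smul (α := ι → M) fun v ↦ ?_)⟩,
    fun _ ↦ ⟨fun {A B} hAB ↦ Matrix.ext fun i j ↦ eq_of_smul_eq_smul (α := M) fun m ↦ ?_⟩⟩
  · rw [scalar_smul, scalar_smul]
    exact funext fun i ↦ hrs (v i)
  · simpa [Pi.single_apply] using congr_fun (hAB (Pi.single j m)) i

theorem exists_linearEquiv_pi [Nonempty ι] (V : Type max w v) [AddCommGroup V]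
    [Module (Matrix ι ι S) V] :
    ∃ W : ModuleCat.{max w v} S, Nonempty (V ≃ₗ[Matrix ι ι S] (ι → W)) :=
  let i := Classical.arbitrary ι
  ⟨(MatrixModCat.toModuleCat S i).obj (.of _ V),
    ⟨toModuleCatFromModuleCatLinearEquiv S (.of _ V) i⟩⟩

@[simps]
def colLinearMap (j : ι) : (ι → S) →ₗ[Matrix ι ι S] Matrix ι ι S where
  toFun v := vecMulVec v (Pi.single j 1)
  map_add' v w := add_vecMulVec v w _
  map_smul' A v := (mul_vecMulVec A v _).symm

end Matrix.Module

namespace LinearMap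

variable {S : Type u} [Ring S] {ι : Type v} [Fintype ι] [DecidableEq ι]
  {W : Type*} [AddCommGroup W] [Module S W]

def rowEntry (g : (ι → W) →ₗ[Matrix ι ι S] Matrix ι ι S) (i j : ι) : W →ₗ[S] S where
  toFun w := g (Pi.single i w) i j
  map_add' w w' := by simp [Pi.single_add]
  map_smul' s w := by
    have : Pi.single i (s • w) = Matrix.single i i s • (Pi.single i w : ι → W) := by simp
    rw [this, map_smul]
    simp

theorem exists_rowEntry_ne_zero {g : (ι → W) →ₗ[Matrix ι ι S] Matrix ι ι S} (hg : g ≠ 0)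
    (i : ι) : ∃ j, g.rowEntry i j ≠ 0 := by
  contrapose! hg
  ext v a b
  calc g v a b = (Matrix.single i a (1 : S) * g v) i b := by simp
    _ = g (Pi.single i (v a)) i b := by rw [← smul_eq_mul, ← map_smul, single_smul, one_smul]
    _ = 0 := LinearMap.congr_fun (hg b) (v a)

end LinearMap

section MatrixInvariance

variable {S : Type u} [Ring S] {ι : Type v} [Fintype ι] [DecidableEq ι] [Nonempty ι]

theorem isPrimitiveRing_matrix_iff : IsPrimitiveRing (Matrix ι ι S) ↔ IsPrimitiveRing S := by
  rw [isPrimitiveRing_iff_exists_simple_faithful.{_, u},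
    isPrimitiveRing_iff_exists_simple_faithful.{_, v}]
  constructor
  · rintro ⟨V, _, _, _, hV⟩
    obtain ⟨W, ⟨e⟩⟩ := exists_linearEquiv_pi (S := S) (ι := ι) V
    exact ⟨W, _, _, isSimpleModule_pi_iff.mp (.congr e.symm),
      faithfulSMul_pi_iff.mp (e.faithfulSMul_iff.mp hV)⟩
  · rintro ⟨M, _, _, _, _⟩
    exact ⟨ι → M, _, _, isSimpleModule_pi_iff.mpr ‹_›, faithfulSMul_pi_iff.mpr ‹_›⟩

theorem isSimpleRing_matrix_iff : IsSimpleRing (Matrix ι ι S) ↔ IsSimpleRing S :=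
  ⟨fun ⟨h⟩ ↦ ⟨TwoSidedIdeal.orderIsoMatrix.isSimpleOrder_iff.mpr h⟩, fun _ ↦ inferInstance⟩

theorem hasMinimalLeftIdeal_matrix_iff :
    HasMinimalLeftIdeal (Matrix ι ι S) ↔ HasMinimalLeftIdeal S := by
  rw [hasMinimalLeftIdeal_iff_exists_simple_linearMap.{_, u},
    hasMinimalLeftIdeal_iff_exists_simple_linearMap.{_, v}]
  obtain ⟨i⟩ := ‹Nonempty ι›
  constructor
  · rintro ⟨V, _, _, _, g, hg⟩
    obtain ⟨W, ⟨e⟩⟩ := exists_linearEquiv_pi (S := S) (ι := ι) V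
    obtain ⟨v, hv⟩ := DFunLike.ne_iff.mp hg
    have hge : g ∘ₗ e.symm.toLinearMap ≠ 0 := DFunLike.ne_iff.mpr ⟨e v, by simpa using hv⟩
    obtain ⟨j, hj⟩ := LinearMap.exists_rowEntry_ne_zero hge i
    exact ⟨W, _, _, isSimpleModule_pi_iff.mp (.congr e.symm), _, hj⟩
  · rintro ⟨M, _, _, _, f, hf⟩
    obtain ⟨m, hm⟩ := DFunLike.ne_iff.mp hf
    refine ⟨ι → M, _, _, isSimpleModule_pi_iff.mpr ‹_›, colLinearMap i ∘ₗ f.mapMatrixModule ι,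
      fun h ↦ hm ?_⟩
    simpa [vecMulVec_apply] using congr_fun (congr_fun (LinearMap.congr_fun h fun _ ↦ m) i) i

end MatrixInvariance

/-- Let `R` be a unital ring and `n` a nonempty finite index type.  Then `R` is CCR if and
only if the ring of `n × n` matrices over `R` is CCR. -/
theorem isCCRRing_matrix_iff (R : Type u) [Ring R] (n : Type v) [Fintype n] [Nonempty n]
    [DecidableEq n] :
    IsCCRRing R ↔ IsCCRRing (Matrix n n R) := by
  rw [IsCCRRing, IsCCRRing, ← TwoSidedIdeal.equivMatrix.forall_congr_right]
  refine forall_congr' fun I ↦ ?_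
  let e := I.matrixQuotientEquiv (n := n)
  rw [TwoSidedIdeal.equivMatrix_apply, e.isPrimitiveRing_iff, e.isSimpleRing_iff,
    e.hasMinimalLeftIdeal_iff, isPrimitiveRing_matrix_iff, isSimpleRing_matrix_iff,
    hasMinimalLeftIdeal_matrix_iff]
end

section
/- Let R be a unital ring and let n be a nonempty finite index type. Then R is GCR if and only if the matrix ring of n-by-n matrices over R is GCR. -/
/-!
Two-sided ideals of `Mₙ(R)` are exactly the `Mₙ(I)`, and `Mₙ(R) ⧸ Mₙ(I) ≅ Mₙ(R ⧸ I)`, so it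
suffices that primitivity and the existence of a minimal left ideal each pass between a ring `S`
and `Mₙ(S)`. For primitivity this is Morita theory: every `Mₙ(S)`-module `M` is `Nⁿ` for the
`S`-module `N = E₁₁ • M`, and `Nⁿ` is simple, resp. faithful, exactly when `N` is. For minimal
left ideals, `S ∙ x` is minimal iff `x ∈ S ∙ (s * x)` whenever `s * x ≠ 0`, and this property
passes from `x` to `E₁₁ x` and from `X` to any nonzero entry `X k l`.
-/

open Matrix

section Transport
variable {R A B : Type*} [Ring R] [Ring A] [Ring B]

theorem LinearEquiv.faithfulSMul {M N : Type*} [AddCommGroup M] [Module R M]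
    [AddCommGroup N] [Module R N] (e : M ≃ₗ[R] N) [FaithfulSMul R N] : FaithfulSMul R M := by
  rw [← Module.annihilator_eq_bot, e.annihilator_eq, Module.annihilator_eq_bot]
  infer_instance

-- `M` may live in any universe: `M ≅ R ⧸ I` brings it down to that of `R`.
theorem IsPrimitiveRing.of_module (M : Type*) [AddCommGroup M] [Module R M] [IsSimpleModule R M]
    [FaithfulSMul R M] : IsPrimitiveRing R := by
  obtain ⟨I, -, ⟨e⟩⟩ := isSimpleModule_iff_quot_maximal.mp ‹IsSimpleModule R M›
  exact ⟨R ⧸ I, _, _, IsSimpleModule.congr e.symm, e.symm.faithfulSMul⟩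

theorem IsPrimitiveRing.of_ringEquiv (e : A ≃+* B) (h : IsPrimitiveRing B) : IsPrimitiveRing A := by
  obtain ⟨M, _, _, hs, hf⟩ := h
  let : Module A M := Module.compHom M (e : A →+* B)
  let idₛₗ : M →ₛₗ[(e : A →+* B)] M :=
    { toFun := id, map_add' := fun _ _ => rfl, map_smul' := fun _ _ => rfl }
  have : IsSimpleModule A M := (idₛₗ.isSimpleModule_iff_of_bijective Function.bijective_id).mpr hs
  have : FaithfulSMul A M := ⟨fun h => e.injective (hf.eq_of_smul_eq_smul h)⟩
  exact IsPrimitiveRing.of_module M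

theorem HasMinimalLeftIdeal.of_ringEquiv (e : A ≃+* B) (h : HasMinimalLeftIdeal B) :
    HasMinimalLeftIdeal A := by
  obtain ⟨L, hL⟩ := h
  let f : A →ₛₗ[(e : A →+* B)] B := { toFun := e, map_add' := e.map_add, map_smul' := e.map_mul }
  exact ⟨_, ((Submodule.orderIsoMapComapOfBijective f e.bijective).symm.isAtom_iff L).mpr hL⟩

end Transport

section MinimalLeftIdeal
variable {R : Type*} [Ring R]

theorem hasMinimalLeftIdeal_iff :
    HasMinimalLeftIdeal R ↔ ∃ x : R, x ≠ 0 ∧ ∀ s : R, s * x ≠ 0 → ∃ t : R, t * (s * x) = x := by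
  constructor
  · rintro ⟨L, hL⟩
    obtain ⟨x, hxL, hx⟩ := Submodule.exists_mem_ne_zero_of_ne_bot hL.1
    refine ⟨x, hx, fun s hsx => ?_⟩
    have hspan : R ∙ (s * x) = L := by
      refine (hL.le_iff.mp (Submodule.span_le.mpr ?_)).resolve_left ?_
      · simpa using L.smul_mem s hxL
      · simpa using hsx
    exact Submodule.mem_span_singleton.mp (hspan ▸ hxL)
  · rintro ⟨x, hx, hrec⟩
    refine ⟨R ∙ x, by simpa using hx, fun W hW => ?_⟩
    by_contra hWb
    obtain ⟨y, hyW, hy⟩ := Submodule.exists_mem_ne_zero_of_ne_bot hWb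
    obtain ⟨s, rfl⟩ := Submodule.mem_span_singleton.mp (hW.le hyW)
    obtain ⟨t, ht⟩ := hrec s hy
    have hxW : x ∈ W := ht ▸ W.smul_mem t hyW
    exact hW.not_ge (Submodule.span_le.mpr (by simpa using hxW))

end MinimalLeftIdeal

section MatrixMinimalLeftIdeal
variable {R : Type*} [Ring R] {n : Type*} [Fintype n] [DecidableEq n]

theorem HasMinimalLeftIdeal.matrix [Nonempty n] (h : HasMinimalLeftIdeal R) :
    HasMinimalLeftIdeal (Matrix n n R) := by
  rw [hasMinimalLeftIdeal_iff] at h ⊢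
  obtain ⟨x, hx, hrec⟩ := h
  obtain ⟨i⟩ := ‹Nonempty n›
  refine ⟨single i i x, fun h0 => hx (by simpa using congrFun₂ h0 i i), fun B hB => ?_⟩
  obtain ⟨k, hk⟩ : ∃ k, B k i * x ≠ 0 := by
    by_contra! hall
    exact hB (Matrix.ext fun a b => by
      by_cases hb : b = i
      · subst hb; simp [hall]
      · simp [Matrix.mul_single_apply_of_ne _ _ _ _ _ hb])
  obtain ⟨t, ht⟩ := hrec (B k i) hk
  refine ⟨single i k t, ?_⟩
  rw [← mul_assoc, single_mul_mul_single, mul_assoc t, ht]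

theorem HasMinimalLeftIdeal.of_matrix (h : HasMinimalLeftIdeal (Matrix n n R)) :
    HasMinimalLeftIdeal R := by
  rw [hasMinimalLeftIdeal_iff] at h ⊢
  obtain ⟨X, hX, hrec⟩ := h
  obtain ⟨k, l, hx⟩ : ∃ k l, X k l ≠ 0 := by
    by_contra! hall
    exact hX (Matrix.ext hall)
  refine ⟨X k l, hx, fun s hs => ?_⟩
  obtain ⟨T, hT⟩ := hrec (single k k s) (fun h0 => hs (by simpa using congrFun₂ h0 k l))
  refine ⟨T k k, ?_⟩
  have := congrArg (single k k (1 : R) * ·) hT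
  simp only [← mul_assoc, single_mul_mul_single, one_mul] at this
  simpa [mul_assoc] using congrFun₂ this k l

end MatrixMinimalLeftIdeal

namespace Matrix.Module
variable {R : Type*} [Ring R] {n : Type*} [Fintype n] [DecidableEq n]
  {M : Type*} [AddCommGroup M] [Module R M]

theorem smul_piSingle_apply (A : Matrix n n R) (j : n) (m : M) (i : n) :
    (A • Pi.single j m : n → M) i = A i j • m := by
  simp [Pi.single_apply]

theorem isSimpleModule_pi_iff_s11 [Nonempty n] :
    IsSimpleModule (Matrix n n R) (n → M) ↔ IsSimpleModule R M := by
  simp only [isSimpleModule_iff_toSpanSingleton_surjective]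
  obtain ⟨i⟩ := ‹Nonempty n›
  constructor
  · rintro ⟨hnt, hsurj⟩
    refine ⟨?_, fun x hx y => ?_⟩
    · obtain ⟨v, hv⟩ := exists_ne (0 : n → M)
      obtain ⟨k, hk⟩ := Function.ne_iff.mp hv
      exact nontrivial_of_ne _ _ hk
    · obtain ⟨A, hA⟩ := hsurj (Pi.single i x) (by simpa using hx) (Pi.single i y)
      refine ⟨A i i, ?_⟩
      rw [LinearMap.toSpanSingleton_apply] at hA ⊢
      rw [← smul_piSingle_apply, hA, Pi.single_eq_same]
  · rintro ⟨hnt, hsurj⟩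
    refine ⟨inferInstance, fun v hv w => ?_⟩
    obtain ⟨k, hk⟩ := Function.ne_iff.mp hv
    choose f hf using fun i => hsurj (v k) hk (w i)
    refine ⟨∑ i, single i k (f i), ?_⟩
    simp only [LinearMap.toSpanSingleton_apply, Finset.sum_smul, single_smul] at hf ⊢
    simp [hf, Finset.univ_sum_single]

theorem faithfulSMul_pi_iff_s11 [Nonempty n] :
    FaithfulSMul (Matrix n n R) (n → M) ↔ FaithfulSMul R M := by
  constructor
  · intro hf
    refine ⟨fun {r s} h => (scalar_inj (n := n)).mp (hf.eq_of_smul_eq_smul fun v => ?_)⟩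
    rw [scalar_smul, scalar_smul]
    exact funext fun i => h (v i)
  · intro hf
    refine ⟨fun {A B} h => Matrix.ext fun i j => hf.eq_of_smul_eq_smul fun m => ?_⟩
    rw [← smul_piSingle_apply, ← smul_piSingle_apply, h]

end Matrix.Module

section MatrixPrimitive
open Matrix.Module
variable {R : Type*} [Ring R] {n : Type*} [Fintype n] [DecidableEq n] [Nonempty n]

theorem IsPrimitiveRing.matrix (h : IsPrimitiveRing R) : IsPrimitiveRing (Matrix n n R) := by
  obtain ⟨M, _, _, hs, hf⟩ := h
  have := isSimpleModule_pi_iff_s11 (n := n).mpr hs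
  have := faithfulSMul_pi_iff_s11 (n := n).mpr hf
  exact .of_module (n → M)

theorem IsPrimitiveRing.of_matrix (h : IsPrimitiveRing (Matrix n n R)) : IsPrimitiveRing R := by
  obtain ⟨N, _, _, hs, hf⟩ := h
  obtain ⟨i⟩ := ‹Nonempty n›
  let : Module R N := Module.compHom N (scalar n : R →+* Matrix n n R)
  have := MatrixModCat.isScalarTower_toModuleCat R (ModuleCat.of (Matrix n n R) N)
  let e := toModuleCatFromModuleCatLinearEquiv R (ModuleCat.of (Matrix n n R) N) i
  have := isSimpleModule_pi_iff_s11.mp (IsSimpleModule.congr e.symm)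
  have := faithfulSMul_pi_iff_s11.mp e.symm.faithfulSMul
  exact .of_module (MatrixModCat.toModuleCatObj R N i)

end MatrixPrimitive

namespace RingCon
variable {R : Type*} [Ring R] {n : Type*} [Fintype n] [DecidableEq n]

theorem mapMatrix_mk'_surjective (c : RingCon R) :
    Function.Surjective (c.mk'.mapMatrix : Matrix n n R →+* Matrix n n c.Quotient) :=
  fun B => ⟨B.map (Function.surjInv c.mk'_surjective),
    Matrix.ext fun _ _ => Function.surjInv_eq c.mk'_surjective _⟩

theorem ker_mapMatrix_mk' (c : RingCon R) :
    ker (c.mk'.mapMatrix : Matrix n n R →+* Matrix n n c.Quotient) = c.matrix n := by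
  ext A B
  simp [← Matrix.ext_iff, RingCon.eq]

noncomputable def matrixQuotientEquiv (c : RingCon R) :
    (c.matrix n).Quotient ≃+* Matrix n n c.Quotient :=
  (RingCon.congr (.refl _) (c.ker_mapMatrix_mk' (n := n)).symm).trans
    (quotientKerEquivOfSurjective _ c.mapMatrix_mk'_surjective)

end RingCon

/-- Let `R` be a unital ring and `n` a nonempty finite index type.  Then `R` is GCR if and
only if the ring of `n × n` matrices over `R` is GCR. -/
theorem isGCRRing_matrix_iff (R : Type u) [Ring R] (n : Type v) [Fintype n] [Nonempty n]
    [DecidableEq n] :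
    IsGCRRing R ↔ IsGCRRing (Matrix n n R) := by
  constructor
  · intro h P hP
    obtain ⟨I, rfl⟩ := TwoSidedIdeal.equivMatrix.surjective P
    let e := I.ringCon.matrixQuotientEquiv (n := n)
    have hI : IsPrimitiveRing I.ringCon.Quotient := (hP.of_ringEquiv e.symm).of_matrix
    exact (h I hI).matrix.of_ringEquiv e
  · intro h I hI
    let e := I.ringCon.matrixQuotientEquiv (n := n)
    exact ((h (I.matrix n) (hI.matrix.of_ringEquiv e)).of_ringEquiv e.symm).of_matrix
end
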